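/- Let k be a field, n ≥ 1 and 0 ≤ d ≤ n. Let E_i denote the span of the first i standard basis vectors of k^n and let B ≤ GL_n(k) be the group of invertible upper triangular matrices. Two d-dimensional linear subspaces V, V' of k^n lie in the same B-orbit if and only if dim(V ∩ E_i) = dim(V' ∩ E_i) for all 0 ≤ i ≤ n; consequently the B-orbits on the Grassmannian of d-dimensional subspaces of k^n are in bijection with the d-element subsets of {1, …, n}, so there are exactly binom(n, d) orbits. (Schubert cell decomposition of the Grassmannian.) -/
import Mathlib


/-- The `i`-th member `E_i` of the standard complete flag of `k^n`: the span of the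
first `i` standard basis vectors, i.e. the vectors vanishing in coordinates `≥ i`. -/
def stdFlag (k : Type*) [Field k] (n : ℕ) (i : Fin (n + 1)) : Submodule k (Fin n → k) where
  carrier := {v | ∀ a : Fin n, (i : ℕ) ≤ (a : ℕ) → v a = 0}
  add_mem' := fun hu hv a ha => by simp [hu a ha, hv a ha]
  zero_mem' := fun a _ => rfl
  smul_mem' := fun c v hv a ha => by simp [hv a ha]

/-- A square matrix is upper triangular if all entries below the diagonal vanish. -/
def IsUpperTriangular {k : Type*} [Field k] {n : ℕ} (A : Matrix (Fin n) (Fin n) k) : Prop :=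
  ∀ i j : Fin n, j < i → A i j = 0

/-- Two subspaces of `k^n` lie in the same orbit of the group `B` of invertible
upper triangular matrices. -/
def SameBOrbitSub {k : Type*} [Field k] {n : ℕ} (V V' : Submodule k (Fin n → k)) : Prop :=
  ∃ g : GL (Fin n) k, IsUpperTriangular (g : Matrix (Fin n) (Fin n) k) ∧
    V.map (Matrix.mulVecLin (g : Matrix (Fin n) (Fin n) k)) = V'

section Aux
open Module Finset

variable {k : Type*} [Field k] {n : ℕ}

lemma mem_stdFlag {i : Fin (n+1)} {v : Fin n → k} :
    v ∈ stdFlag k n i ↔ ∀ a : Fin n, (i : ℕ) ≤ (a : ℕ) → v a = 0 := Iff.rfl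

lemma stdFlag_mono {i j : Fin (n+1)} (h : i ≤ j) : stdFlag k n i ≤ stdFlag k n j :=
  fun v hv a ha => hv a (le_trans (by exact_mod_cast h) ha)

def coordSub (k : Type*) [Field k] (n : ℕ) (T : Finset (Fin n)) : Submodule k (Fin n → k) where
  carrier := {v | ∀ a : Fin n, a ∉ T → v a = 0}
  add_mem' := fun hu hv a ha => by simp [hu a ha, hv a ha]
  zero_mem' := fun a _ => rfl
  smul_mem' := fun c v hv a ha => by simp [hv a ha]

lemma mem_coordSub {T : Finset (Fin n)} {v : Fin n → k} :
    v ∈ coordSub k n T ↔ ∀ a ∉ T, v a = 0 := Iff.rfl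

def extMap (k : Type*) [Field k] {n : ℕ} (T : Finset (Fin n)) : (T → k) →ₗ[k] (Fin n → k) where
  toFun x a := if h : a ∈ T then x ⟨a, h⟩ else 0
  map_add' x y := by funext a; by_cases h : a ∈ T <;> simp [h]
  map_smul' c x := by funext a; by_cases h : a ∈ T <;> simp [h]

lemma extMap_inj (T : Finset (Fin n)) : Function.Injective (extMap k T) := by
  intro x y h
  funext a
  have := congrFun h a.1
  simpa [extMap, a.2] using this

lemma range_extMap (T : Finset (Fin n)) : LinearMap.range (extMap k T) = coordSub k n T := by
  ext v
  constructor
  · rintro ⟨x, rfl⟩ a ha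
    simp [extMap, ha]
  · intro hv
    exact ⟨fun t => v t, by funext a; by_cases h : a ∈ T <;> simp [extMap, h, hv a]⟩

lemma finrank_coordSub (T : Finset (Fin n)) : finrank k (coordSub k n T) = T.card := by
  rw [← range_extMap, LinearMap.finrank_range_of_inj (extMap_inj T),
    Module.finrank_fintype_fun_eq_card, Fintype.card_coe]

lemma coordSub_inf_stdFlag (T : Finset (Fin n)) (i : Fin (n+1)) :
    coordSub k n T ⊓ stdFlag k n i = coordSub k n (T.filter fun a : Fin n => (a:ℕ) < (i:ℕ)) := by
  ext v
  simp only [Submodule.mem_inf, mem_coordSub, mem_stdFlag, Finset.mem_filter]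
  constructor
  · rintro ⟨h1, h2⟩ a ha
    by_cases hT : a ∈ T
    · exact h2 a (by push_neg at ha; exact ha hT)
    · exact h1 a hT
  · intro h
    refine ⟨fun a ha => h a (fun hc => ha hc.1), fun a ha => h a (fun hc => absurd hc.2 (not_lt.mpr ha))⟩

end Aux

section Aux2
open Module Finset

variable {k : Type*} [Field k] {n : ℕ}

lemma finrank_inf_flag_succ_le (V : Submodule k (Fin n → k)) (a : Fin n) :
    finrank k ↥(V ⊓ stdFlag k n a.succ) ≤ finrank k ↥(V ⊓ stdFlag k n a.castSucc) + 1 := by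
  classical
  set W := V ⊓ stdFlag k n a.succ with hW
  let f : ↥W →ₗ[k] k :=
    { toFun := fun v => v.1 a
      map_add' := fun u v => rfl
      map_smul' := fun c v => rfl }
  have hrn := LinearMap.finrank_range_add_finrank_ker f
  have hmem : ∀ c : ↥(LinearMap.ker f), (c.1.1 : Fin n → k) ∈ V ⊓ stdFlag k n a.castSucc := by
    rintro ⟨⟨v, hv⟩, hker⟩
    refine ⟨hv.1, fun b hb => ?_⟩
    rcases eq_or_lt_of_le hb with hb' | hb'
    · have : b = a := by apply Fin.ext; simpa [Fin.coe_castSucc] using hb'.symm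
      subst this
      exact hker
    · exact hv.2 b (by simpa [Fin.val_succ] using hb')
  let g : ↥(LinearMap.ker f) →ₗ[k] ↥(V ⊓ stdFlag k n a.castSucc) :=
    LinearMap.codRestrict _ ((W.subtype).comp (LinearMap.ker f).subtype) hmem
  have hginj : Function.Injective g := by
    intro x y hxy
    have : (x.1.1 : Fin n → k) = y.1.1 := congrArg (fun z : ↥(V ⊓ stdFlag k n a.castSucc) => (z : Fin n → k)) hxy
    exact Subtype.ext (Subtype.ext this)
  have hker_le : finrank k ↥(LinearMap.ker f) ≤ finrank k ↥(V ⊓ stdFlag k n a.castSucc) :=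
    LinearMap.finrank_le_finrank_of_injective hginj
  have hrange_le : finrank k ↥(LinearMap.range f) ≤ 1 := by
    have := Submodule.finrank_le (LinearMap.range f)
    simpa [Module.finrank_self] using this
  omega

lemma finrank_inf_flag_mono (V : Submodule k (Fin n → k)) (a : Fin n) :
    finrank k ↥(V ⊓ stdFlag k n a.castSucc) ≤ finrank k ↥(V ⊓ stdFlag k n a.succ) :=
  Submodule.finrank_mono (inf_le_inf_left V (stdFlag_mono (by
    rw [Fin.le_def]; simp [Fin.coe_castSucc, Fin.val_succ])))

/-- the jump set of a subspace -/
noncomputable def jumpSet (V : Submodule k (Fin n → k)) : Finset (Fin n) :=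
  Finset.univ.filter fun a =>
    finrank k ↥(V ⊓ stdFlag k n a.castSucc) ≠ finrank k ↥(V ⊓ stdFlag k n a.succ)

lemma mem_jumpSet {V : Submodule k (Fin n → k)} {a : Fin n} :
    a ∈ jumpSet V ↔
      finrank k ↥(V ⊓ stdFlag k n a.castSucc) ≠ finrank k ↥(V ⊓ stdFlag k n a.succ) := by
  simp [jumpSet]

lemma card_filter_lt_succ (S : Finset (Fin n)) (a : Fin n) :
    (S.filter fun b : Fin n => (b:ℕ) < (a:ℕ)+1).card
      = (S.filter fun b : Fin n => (b:ℕ) < (a:ℕ)).card + (if a ∈ S then 1 else 0) := by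
  classical
  have key : ∀ b : Fin n, ((b:ℕ) < (a:ℕ)+1) ↔ ((b:ℕ) < (a:ℕ) ∨ b = a) := by
    intro b
    rw [Nat.lt_succ_iff_lt_or_eq, Fin.val_inj]
  simp only [key]
  rw [Finset.filter_or, Finset.card_union_of_disjoint, Finset.filter_eq']
  · split_ifs with h <;> simp
  · rw [Finset.disjoint_left]
    intro b hb hb'
    rw [Finset.mem_filter] at hb hb'
    exact absurd hb.2 (by rw [hb'.2]; exact lt_irrefl _)

lemma finrank_inf_flag_eq (V : Submodule k (Fin n → k)) (i : Fin (n+1)) :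
    finrank k ↥(V ⊓ stdFlag k n i) = ((jumpSet V).filter fun a : Fin n => (a:ℕ) < (i:ℕ)).card := by
  induction i using Fin.induction with
  | zero =>
    have hbot : stdFlag k n (0 : Fin (n+1)) = ⊥ := by
      ext v
      simp only [mem_stdFlag, Submodule.mem_bot]
      constructor
      · intro h; funext a; exact h a (Nat.zero_le _)
      · rintro rfl a _; rfl
    rw [hbot, inf_bot_eq]
    simp
  | succ a ih =>
    have hcard := card_filter_lt_succ (jumpSet V) a
    simp only [Fin.coe_castSucc] at ih
    rw [Fin.val_succ, hcard, ← ih]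
    by_cases h : a ∈ jumpSet V
    · rw [if_pos h]
      rw [mem_jumpSet] at h
      have h1 := finrank_inf_flag_succ_le V a
      have h2 := finrank_inf_flag_mono V a
      omega
    · rw [if_neg h]
      rw [mem_jumpSet, not_ne_iff] at h
      omega

lemma card_jumpSet (V : Submodule k (Fin n → k)) : (jumpSet V).card = finrank k V := by
  have h := finrank_inf_flag_eq V (Fin.last n)
  have htop : stdFlag k n (Fin.last n) = ⊤ := by
    ext v
    simp only [mem_stdFlag, Submodule.mem_top, iff_true]
    intro a ha
    exact absurd ha (by simpa [Fin.val_last] using a.isLt.not_ge)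
  rw [htop, inf_top_eq] at h
  rw [h, Finset.filter_true_of_mem]
  intro a _
  simpa [Fin.val_last] using a.isLt

end Aux2

section Aux3
open Module Finset

variable {k : Type*} [Field k] {n : ℕ}

lemma gl_inv_mul (g : GL (Fin n) k) :
    ((g⁻¹ : GL (Fin n) k) : Matrix (Fin n) (Fin n) k) * (g : Matrix (Fin n) (Fin n) k) = 1 := by
  have h : (g⁻¹ * g : GL (Fin n) k) = 1 := inv_mul_cancel g
  calc ((g⁻¹ : GL (Fin n) k) : Matrix (Fin n) (Fin n) k) * g = ((g⁻¹ * g : GL (Fin n) k) : Matrix (Fin n) (Fin n) k) := rfl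
    _ = 1 := by rw [h]; rfl

lemma gl_cancel (g : GL (Fin n) k) (x : Fin n → k) :
    ((g⁻¹ : GL (Fin n) k) : Matrix (Fin n) (Fin n) k).mulVecLin
      ((g : Matrix (Fin n) (Fin n) k).mulVecLin x) = x := by
  have : ((g⁻¹ : GL (Fin n) k) : Matrix (Fin n) (Fin n) k).mulVecLin ∘ₗ
      (g : Matrix (Fin n) (Fin n) k).mulVecLin = LinearMap.id := by
    rw [← Matrix.mulVecLin_mul, gl_inv_mul, Matrix.mulVecLin_one]
  exact LinearMap.congr_fun this x

lemma mulVecLin_gl_injective (g : GL (Fin n) k) :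
    Function.Injective ((g : Matrix (Fin n) (Fin n) k).mulVecLin) := by
  intro x y hxy
  rw [← gl_cancel g x, ← gl_cancel g y, hxy]

lemma map_stdFlag_le {A : Matrix (Fin n) (Fin n) k} (hA : IsUpperTriangular A) (i : Fin (n+1)) :
    (stdFlag k n i).map A.mulVecLin ≤ stdFlag k n i := by
  rintro _ ⟨v, hv, rfl⟩ a ha
  show A.mulVec v a = 0
  simp only [Matrix.mulVec, dotProduct]
  apply Finset.sum_eq_zero
  intro j _
  by_cases hj : (i:ℕ) ≤ (j:ℕ)
  · rw [hv j hj, mul_zero]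
  · rw [hA a j (by rw [Fin.lt_def]; omega), zero_mul]

lemma map_stdFlag_eq (g : GL (Fin n) k)
    (hg : IsUpperTriangular (g : Matrix (Fin n) (Fin n) k)) (i : Fin (n+1)) :
    (stdFlag k n i).map ((g : Matrix (Fin n) (Fin n) k).mulVecLin) = stdFlag k n i := by
  apply Submodule.eq_of_le_of_finrank_le (map_stdFlag_le hg i)
  exact le_of_eq (LinearEquiv.finrank_eq
    (Submodule.equivMapOfInjective _ (mulVecLin_gl_injective g) _))

lemma isUT_of_map_le {A : Matrix (Fin n) (Fin n) k}
    (h : ∀ i : Fin (n+1), (stdFlag k n i).map A.mulVecLin ≤ stdFlag k n i) :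
    IsUpperTriangular A := by
  intro i j hij
  have hmem : Pi.single j (1:k) ∈ stdFlag k n j.succ := by
    intro a ha
    apply Pi.single_eq_of_ne
    intro e
    rw [e, Fin.val_succ] at ha
    omega
  have h2 := h j.succ (Submodule.mem_map_of_mem hmem) i (by
    rw [Fin.val_succ, Fin.lt_def] at *
    omega)
  simpa [Matrix.mulVecLin_apply, Matrix.mulVec_single] using h2

lemma dims_eq_of_same {V V' : Submodule k (Fin n → k)} (h : SameBOrbitSub V V') (i : Fin (n+1)) :
    finrank k ↥(V ⊓ stdFlag k n i) = finrank k ↥(V' ⊓ stdFlag k n i) := by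
  obtain ⟨g, hg, rfl⟩ := h
  have hkey : (V.map ((g : Matrix (Fin n) (Fin n) k).mulVecLin)) ⊓ stdFlag k n i
      = (V ⊓ stdFlag k n i).map ((g : Matrix (Fin n) (Fin n) k).mulVecLin) := by
    rw [Submodule.map_inf _ (mulVecLin_gl_injective g), map_stdFlag_eq g hg i]
  rw [hkey]
  exact LinearEquiv.finrank_eq (Submodule.equivMapOfInjective _ (mulVecLin_gl_injective g) _)

lemma same_refl (V : Submodule k (Fin n → k)) : SameBOrbitSub V V := by
  refine ⟨1, ?_, ?_⟩
  · intro i j hij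
    show (1 : Matrix (Fin n) (Fin n) k) i j = 0
    exact Matrix.one_apply_ne hij.ne'
  · show V.map (Matrix.mulVecLin (1 : Matrix (Fin n) (Fin n) k)) = V
    rw [Matrix.mulVecLin_one, Submodule.map_id]

lemma same_symm {V V' : Submodule k (Fin n → k)} (h : SameBOrbitSub V V') :
    SameBOrbitSub V' V := by
  obtain ⟨g, hg, rfl⟩ := h
  have hmapinv : ∀ W : Submodule k (Fin n → k),
      (W.map ((g : Matrix (Fin n) (Fin n) k).mulVecLin)).map
        (((g⁻¹ : GL (Fin n) k) : Matrix (Fin n) (Fin n) k).mulVecLin) = W := by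
    intro W
    rw [← Submodule.map_comp, ← Matrix.mulVecLin_mul, gl_inv_mul, Matrix.mulVecLin_one,
      Submodule.map_id]
  refine ⟨g⁻¹, ?_, hmapinv V⟩
  apply isUT_of_map_le
  intro i
  calc (stdFlag k n i).map (((g⁻¹ : GL (Fin n) k) : Matrix (Fin n) (Fin n) k).mulVecLin)
      = ((stdFlag k n i).map ((g : Matrix (Fin n) (Fin n) k).mulVecLin)).map
          (((g⁻¹ : GL (Fin n) k) : Matrix (Fin n) (Fin n) k).mulVecLin) := by
        rw [map_stdFlag_eq g hg i]
    _ = stdFlag k n i := hmapinv _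
    _ ≤ stdFlag k n i := le_rfl

lemma same_trans {V V' V'' : Submodule k (Fin n → k)}
    (h1 : SameBOrbitSub V V') (h2 : SameBOrbitSub V' V'') : SameBOrbitSub V V'' := by
  obtain ⟨g, hg, rfl⟩ := h1
  obtain ⟨g', hg', rfl⟩ := h2
  have hmul : ((g' * g : GL (Fin n) k) : Matrix (Fin n) (Fin n) k)
      = (g' : Matrix (Fin n) (Fin n) k) * (g : Matrix (Fin n) (Fin n) k) := rfl
  refine ⟨g' * g, ?_, ?_⟩
  · apply isUT_of_map_le
    intro i
    rw [hmul, Matrix.mulVecLin_mul, Submodule.map_comp, map_stdFlag_eq g hg i]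
    exact map_stdFlag_le hg' i
  · rw [hmul, Matrix.mulVecLin_mul, Submodule.map_comp]

end Aux3

section Aux4
open Module Finset

variable {k : Type*} [Field k] {n : ℕ}

lemma exists_pivot {V : Submodule k (Fin n → k)} {a : Fin n} (ha : a ∈ jumpSet V) :
    ∃ v, v ∈ V ∧ (∀ b : Fin n, (a:ℕ)+1 ≤ (b:ℕ) → v b = 0) ∧ v a ≠ 0 := by
  rw [mem_jumpSet] at ha
  have hle : V ⊓ stdFlag k n a.castSucc ≤ V ⊓ stdFlag k n a.succ :=
    inf_le_inf_left V (stdFlag_mono (by rw [Fin.le_def]; simp [Fin.coe_castSucc, Fin.val_succ]))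
  have hlt : V ⊓ stdFlag k n a.castSucc < V ⊓ stdFlag k n a.succ :=
    lt_of_le_of_ne hle (fun he => ha (by rw [he]))
  obtain ⟨v, hv1, hv2⟩ := SetLike.exists_of_lt hlt
  refine ⟨v, hv1.1, fun b hb => hv1.2 b (by rw [Fin.val_succ]; exact hb), ?_⟩
  intro hva
  apply hv2
  refine ⟨hv1.1, fun b hb => ?_⟩
  rw [Fin.coe_castSucc] at hb
  rcases eq_or_lt_of_le hb with hb' | hb'
  · have : b = a := Fin.ext hb'.symm
    rw [this]; exact hva
  · exact hv1.2 b (by rw [Fin.val_succ]; omega)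

lemma same_coordSub_jumpSet (V : Submodule k (Fin n → k)) :
    SameBOrbitSub (coordSub k n (jumpSet V)) V := by
  classical
  choose w hw1 hw2 hw3 using fun (a : Fin n) (ha : a ∈ jumpSet V) => exists_pivot ha
  set col : Fin n → (Fin n → k) := fun j =>
    if h : j ∈ jumpSet V then w j h else Pi.single j 1 with hcol
  set A : Matrix (Fin n) (Fin n) k := Matrix.of fun a j => col j a with hA
  have hUT : IsUpperTriangular A := by
    intro i j hij
    show col j i = 0
    simp only [hcol]
    by_cases h : j ∈ jumpSet V
    · rw [dif_pos h]
      exact hw2 j h i (by rw [Fin.lt_def] at hij; omega)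
    · rw [dif_neg h]
      exact Pi.single_eq_of_ne hij.ne' 1
  have hdiag : ∀ j, A j j ≠ 0 := by
    intro j
    show col j j ≠ 0
    simp only [hcol]
    by_cases h : j ∈ jumpSet V
    · rw [dif_pos h]; exact hw3 j h
    · rw [dif_neg h]; simp
  have hdet : A.det ≠ 0 := by
    rw [Matrix.det_of_upperTriangular (fun i j h => hUT i j h)]
    exact Finset.prod_ne_zero_iff.mpr fun j _ => hdiag j
  have hunit : IsUnit A := (Matrix.isUnit_iff_isUnit_det A).mpr (Ne.isUnit hdet)
  refine ⟨hunit.unit, ?_, ?_⟩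
  · rw [IsUnit.unit_spec]; exact hUT
  · rw [IsUnit.unit_spec]
    have hmulvec : ∀ v : Fin n → k, A.mulVec v = ∑ j : Fin n, v j • col j := by
      intro v
      funext a
      simp only [Matrix.mulVec, dotProduct, Finset.sum_apply, Pi.smul_apply,
        smul_eq_mul, hA, Matrix.of_apply]
      exact Finset.sum_congr rfl fun j _ => mul_comm _ _
    have hle : (coordSub k n (jumpSet V)).map A.mulVecLin ≤ V := by
      rintro _ ⟨v, hv, rfl⟩
      show A.mulVec v ∈ V
      rw [hmulvec]
      apply Submodule.sum_mem
      intro j _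
      by_cases h : j ∈ jumpSet V
      · apply Submodule.smul_mem
        simp only [hcol]
        rw [dif_pos h]
        exact hw1 j h
      · rw [hv j h, zero_smul]
        exact Submodule.zero_mem V
    apply Submodule.eq_of_le_of_finrank_le hle
    have hinj : Function.Injective A.mulVecLin := by
      have := mulVecLin_gl_injective hunit.unit
      rwa [IsUnit.unit_spec] at this
    have : finrank k ↥((coordSub k n (jumpSet V)).map A.mulVecLin)
        = finrank k ↥(coordSub k n (jumpSet V)) :=
      (LinearEquiv.finrank_eq (Submodule.equivMapOfInjective _ hinj _)).symm
    rw [this, finrank_coordSub, card_jumpSet]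

lemma jumpSet_eq_of_dims {V V' : Submodule k (Fin n → k)}
    (h : ∀ i : Fin (n+1), finrank k ↥(V ⊓ stdFlag k n i) = finrank k ↥(V' ⊓ stdFlag k n i)) :
    jumpSet V = jumpSet V' := by
  ext a
  rw [mem_jumpSet, mem_jumpSet, h, h]

lemma same_of_dims {V V' : Submodule k (Fin n → k)}
    (h : ∀ i : Fin (n+1), finrank k ↥(V ⊓ stdFlag k n i) = finrank k ↥(V' ⊓ stdFlag k n i)) :
    SameBOrbitSub V V' := by
  apply same_trans (same_symm (same_coordSub_jumpSet V))
  rw [jumpSet_eq_of_dims h]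
  exact same_coordSub_jumpSet V'

lemma dims_eq_of_jumpSet {V V' : Submodule k (Fin n → k)} (h : jumpSet V = jumpSet V')
    (i : Fin (n+1)) :
    finrank k ↥(V ⊓ stdFlag k n i) = finrank k ↥(V' ⊓ stdFlag k n i) := by
  rw [finrank_inf_flag_eq, finrank_inf_flag_eq, h]

lemma jumpSet_coordSub (S : Finset (Fin n)) : jumpSet (coordSub k n S) = S := by
  ext a
  rw [mem_jumpSet, coordSub_inf_stdFlag, coordSub_inf_stdFlag, finrank_coordSub,
    finrank_coordSub]
  simp only [Fin.coe_castSucc, Fin.val_succ]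
  rw [card_filter_lt_succ]
  by_cases h : a ∈ S <;> simp [h]

end Aux4

/-- Schubert cell decomposition of the Grassmannian: two `d`-dimensional subspaces
`V, V'` of `k^n` are in the same `B`-orbit iff `dim (V ∩ E_i) = dim (V' ∩ E_i)` for all
`i`; consequently the `B`-orbits on the Grassmannian are in bijection with the
`d`-element subsets of `{1, …, n}`, so there are exactly `binom(n,d)` orbits. -/
theorem schubert_cells_of_grassmannian {k : Type*} [Field k] {n d : ℕ} (hn : 1 ≤ n)
    (hd : d ≤ n) :
    (∀ V V' : Submodule k (Fin n → k),
      Module.finrank k V = d → Module.finrank k V' = d →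
      (SameBOrbitSub V V' ↔
        ∀ i : Fin (n + 1),
          Module.finrank k ↥(V ⊓ stdFlag k n i) =
            Module.finrank k ↥(V' ⊓ stdFlag k n i))) ∧
    (∃ φ : {V : Submodule k (Fin n → k) // Module.finrank k V = d} →
        {S : Finset (Fin n) // S.card = d},
      Function.Surjective φ ∧
      ∀ V V' : {V : Submodule k (Fin n → k) // Module.finrank k V = d},
        φ V = φ V' ↔ SameBOrbitSub V.1 V'.1) ∧
    Nat.card {O : Set {V : Submodule k (Fin n → k) // Module.finrank k V = d} |
      ∃ V : {V : Submodule k (Fin n → k) // Module.finrank k V = d},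
        O = {V' | SameBOrbitSub V.1 V'.1}} = Nat.choose n d := by
  classical
  refine ⟨?_, ?_, ?_⟩
  · intro V V' _ _
    exact ⟨fun h i => dims_eq_of_same h i, same_of_dims⟩
  · refine ⟨fun V => ⟨jumpSet V.1, by rw [card_jumpSet, V.2]⟩, ?_, ?_⟩
    · rintro ⟨S, hS⟩
      exact ⟨⟨coordSub k n S, by rw [finrank_coordSub]; exact hS⟩,
        Subtype.ext (jumpSet_coordSub S)⟩
    · intro V V'
      constructor
      · intro h
        exact same_of_dims (dims_eq_of_jumpSet (congrArg Subtype.val h))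
      · intro h
        exact Subtype.ext (jumpSet_eq_of_dims (dims_eq_of_same h))
  · set Grass := {V : Submodule k (Fin n → k) // Module.finrank k V = d} with hGrass
    let cS : {S : Finset (Fin n) // S.card = d} → Grass :=
      fun S => ⟨coordSub k n S.1, by rw [finrank_coordSub]; exact S.2⟩
    let f : {S : Finset (Fin n) // S.card = d} →
        ↥{O : Set Grass | ∃ V : Grass, O = {V' | SameBOrbitSub V.1 V'.1}} :=
      fun S => ⟨{V' | SameBOrbitSub (cS S).1 V'.1}, ⟨cS S, rfl⟩⟩
    have hbij : Function.Bijective f := by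
      constructor
      · intro S S' h
        have h1 : {V' : Grass | SameBOrbitSub (cS S).1 V'.1}
            = {V' : Grass | SameBOrbitSub (cS S').1 V'.1} := congrArg Subtype.val h
        have h2 : SameBOrbitSub (cS S).1 (cS S').1 := by
          have hmem : cS S' ∈ {V' : Grass | SameBOrbitSub (cS S').1 V'.1} := same_refl _
          rw [← h1] at hmem
          exact hmem
        apply Subtype.ext
        calc S.1 = jumpSet (cS S).1 := (jumpSet_coordSub S.1).symm
          _ = jumpSet (cS S').1 := jumpSet_eq_of_dims (dims_eq_of_same h2)
          _ = S'.1 := jumpSet_coordSub S'.1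
      · rintro ⟨O, V, rfl⟩
        refine ⟨⟨jumpSet V.1, by rw [card_jumpSet, V.2]⟩, Subtype.ext ?_⟩
        show {V' : Grass | SameBOrbitSub (coordSub k n (jumpSet V.1)) V'.1}
            = {V' : Grass | SameBOrbitSub V.1 V'.1}
        ext V'
        constructor
        · intro h
          exact same_trans (same_symm (same_coordSub_jumpSet V.1)) h
        · intro h
          exact same_trans (same_coordSub_jumpSet V.1) h
    rw [← Nat.card_congr (Equiv.ofBijective f hbij), Nat.card_eq_fintype_card,
      Fintype.card_finset_len, Fintype.card_fin]
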